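/- arXiv:2204.11342 — 2 statements merged into one kernel-verified Lean document; each statement's English description precedes it below -/
import Mathlib

section
/- Let γ ∈ ℝ, let p ∈ [1,∞], and take the specific forcing term f(x,t) := (1+t)^{-γ} 𝟙_{B_1(0)}(x). Then for every ν > 0 there exist c > 0 and T ≥ 2 such that for all t ≥ T the mild solution u satisfies: ‖u(·,t)‖_{L^p({x : |x| ≥ ν t^θ})} ≥ c t^{-σ(p)+1-γ} if γ < 1; ≥ c t^{-σ(p)} log t if γ = 1; and ≥ c t^{-σ(p)} if γ > 1. (This shows the decay rates of the exterior-region upper estimates are sharp.) -/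
/-!
For `ν t^θ ≤ ‖x‖ ≤ 2ν t^θ`, `‖y‖ < 1` and `0 < s < t/2`, the similarity variable
`(t-s)^{-θ} (x-y)` stays in a fixed compact annulus, on which `G ≥ m > 0`. Hence
`u(x,t) ≥ m |B₁| t^{-σ*} ∫₀^{t/2} (1+s)^{-γ} ds` for all such `x`; they fill a set of volume
`≍ t^{Nθ}`, which turns this into the rate `t^{-σ(p)}` in `L^p`, while the time integral is
`≍ t^{1-γ}`, `≍ log t` or `≍ 1`. Since the Duhamel formula is a Bochner integral, the lower bound
also needs the integrand to be integrable: the decay `G ξ ≤ C₁ ‖ξ‖^{-(N+2β)}` bounds the kernel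
by `M + C₁ r^{2α-1}`.
-/

open MeasureTheory Real Set Pointwise
open scoped ENNReal

noncomputable section

/-- Euclidean space ℝ^N. -/
abbrev Euc (N : ℕ) : Type := EuclideanSpace ℝ (Fin N)

/-- The self-similarity exponent θ := α/(2β). -/
def thetaV (α β : ℝ) : ℝ := α / (2 * β)

/-- σ* := 1 - α + Nθ. -/
def sigmaStar (N : ℕ) (α β : ℝ) : ℝ := 1 - α + (N : ℝ) * thetaV α β

/-- σ(p) := σ* - Nθ/p (with σ(∞) = σ*, since (∞ : ℝ≥0∞).toReal = 0 and x/0 = 0). -/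
def sigmaP (N : ℕ) (α β : ℝ) (p : ℝ≥0∞) : ℝ :=
  sigmaStar N α β - (N : ℝ) * thetaV α β / p.toReal

/-- p ∈ [1,∞] is subcritical: p arbitrary if N < 2β, p < ∞ if N = 2β,
and p < p_c := N/(N-2β) if N > 2β. -/
def Subcritical (N : ℕ) (β : ℝ) (p : ℝ≥0∞) : Prop :=
  ((N : ℝ) < 2 * β) ∨ ((N : ℝ) = 2 * β ∧ p ≠ ∞) ∨
    (2 * β < (N : ℝ) ∧ p < ENNReal.ofReal ((N : ℝ) / ((N : ℝ) - 2 * β)))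

/-- The kernel Y(x,t) := t^{-σ*} G(x t^{-θ}). -/
def kernelY (N : ℕ) (α β : ℝ) (G : Euc N → ℝ) (x : Euc N) (t : ℝ) : ℝ :=
  t ^ (-(sigmaStar N α β)) * G ((t ^ (-(thetaV α β))) • x)

/-- The mild solution given by Duhamel's formula:
u(x,t) = ∫₀^t ∫_{ℝ^N} Y(x-y,t-s) f(y,s) dy ds. -/
def mildSol (N : ℕ) (α β : ℝ) (G : Euc N → ℝ) (f : Euc N → ℝ → ℝ) (x : Euc N) (t : ℝ) : ℝ :=
  ∫ s in Ioo (0 : ℝ) t, ∫ y, kernelY N α β G (x - y) (t - s) * f y s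

open Filter
open scoped Interval

lemma setIntegral_Ioo_one_add_rpow {τ : ℝ} (hτ : 0 ≤ τ) (r : ℝ) :
    ∫ s in Ioo 0 τ, (1 + s) ^ r = ∫ u in (1 : ℝ)..1 + τ, u ^ r := by
  rw [← integral_Ioc_eq_integral_Ioo, ← intervalIntegral.integral_of_le hτ,
    intervalIntegral.integral_comp_add_left (fun u => u ^ r), add_zero]

lemma setIntegral_Ioo_one_add_rpow_neg {τ γ : ℝ} (hτ : 0 ≤ τ) (hγ : γ ≠ 1) :
    ∫ s in Ioo 0 τ, (1 + s) ^ (-γ) = ((1 + τ) ^ (1 - γ) - 1) / (1 - γ) := by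
  have h0 : (0 : ℝ) ∉ [[1, 1 + τ]] := by
    rw [uIcc_of_le (by linarith)]; exact fun h => by linarith [h.1]
  rw [setIntegral_Ioo_one_add_rpow hτ, integral_rpow (Or.inr ⟨by contrapose! hγ; linarith, h0⟩),
    one_rpow, neg_add_eq_sub]

lemma setIntegral_Ioo_one_add_rpow_neg_one {τ : ℝ} (hτ : 0 ≤ τ) :
    ∫ s in Ioo 0 τ, (1 + s) ^ (-1 : ℝ) = Real.log (1 + τ) := by
  simp_rw [setIntegral_Ioo_one_add_rpow hτ, rpow_neg_one]
  rw [integral_inv_of_pos one_pos (by linarith), div_one]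

lemma exists_eventually_mul_rpow_le_setIntegral_of_lt_one {γ : ℝ} (hγ : γ < 1) :
    ∃ c > (0 : ℝ), ∀ᶠ t : ℝ in atTop, c * t ^ (1 - γ) ≤ ∫ s in Ioo 0 (t / 2), (1 + s) ^ (-γ) := by
  have ha : 0 < 1 - γ := by linarith
  refine ⟨(2 ^ (1 - γ))⁻¹ / (2 * (1 - γ)), by positivity, ?_⟩
  have hlarge : ∀ᶠ t : ℝ in atTop, 2 ≤ (t / 2) ^ (1 - γ) :=
    ((tendsto_rpow_atTop ha).comp (tendsto_id.atTop_div_const two_pos)).eventually_ge_atTop 2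
  filter_upwards [hlarge, eventually_gt_atTop 0] with t ht ht0
  rw [setIntegral_Ioo_one_add_rpow_neg (by positivity) hγ.ne, le_div_iff₀ ha]
  have hmono : (t / 2) ^ (1 - γ) ≤ (1 + t / 2) ^ (1 - γ) := by gcongr; linarith
  have hsplit : (t / 2) ^ (1 - γ) = (2 ^ (1 - γ))⁻¹ * t ^ (1 - γ) := by
    rw [div_rpow ht0.le zero_le_two]; ring
  have hc : (2 ^ (1 - γ))⁻¹ / (2 * (1 - γ)) * t ^ (1 - γ) * (1 - γ) = (t / 2) ^ (1 - γ) / 2 := by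
    rw [hsplit]; field_simp
  linarith

lemma exists_eventually_le_setIntegral_of_one_lt {γ : ℝ} (hγ : 1 < γ) :
    ∃ c > (0 : ℝ), ∀ᶠ t : ℝ in atTop, c ≤ ∫ s in Ioo 0 (t / 2), (1 + s) ^ (-γ) := by
  have hb : 0 < γ - 1 := by linarith
  refine ⟨1 / 2 / (γ - 1), by positivity, ?_⟩
  have hsmall : ∀ᶠ t : ℝ in atTop, (1 + t / 2) ^ (1 - γ) ≤ 1 / 2 := by
    have h := (tendsto_rpow_neg_atTop hb).comp
      (tendsto_atTop_add_const_left _ 1 (tendsto_id.atTop_div_const two_pos))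
    rw [neg_sub] at h
    exact h.eventually (ge_mem_nhds (by norm_num : (0 : ℝ) < 1 / 2))
  filter_upwards [hsmall, eventually_ge_atTop 0] with t ht ht0
  rw [setIntegral_Ioo_one_add_rpow_neg (by positivity) hγ.ne', le_div_iff_of_neg (by linarith)]
  have hc : 1 / 2 / (γ - 1) * (1 - γ) = -(1 / 2) := by field_simp; ring
  linarith

lemma half_log_le_setIntegral_one_add_rpow_neg_one {t : ℝ} (ht : 0 < t) :
    1 / 2 * Real.log t ≤ ∫ s in Ioo 0 (t / 2), (1 + s) ^ (-1 : ℝ) := by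
  rw [setIntegral_Ioo_one_add_rpow_neg_one (by positivity)]
  have hsq : t ≤ (1 + t / 2) ^ 2 := by nlinarith [sq_nonneg (t / 2 - 1)]
  have := Real.log_le_log ht hsq
  rw [Real.log_pow] at this
  push_cast at this
  linarith

lemma exists_lower_bound_setIntegral_one_add_rpow_neg (γ : ℝ) :
    ∃ c > (0 : ℝ), ∀ᶠ t : ℝ in atTop,
      (γ < 1 → c * t ^ (1 - γ) ≤ ∫ s in Ioo 0 (t / 2), (1 + s) ^ (-γ)) ∧
      (γ = 1 → c * Real.log t ≤ ∫ s in Ioo 0 (t / 2), (1 + s) ^ (-γ)) ∧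
      (1 < γ → c ≤ ∫ s in Ioo 0 (t / 2), (1 + s) ^ (-γ)) := by
  rcases lt_trichotomy γ 1 with hγ | rfl | hγ
  · obtain ⟨c, hc, h⟩ := exists_eventually_mul_rpow_le_setIntegral_of_lt_one hγ
    exact ⟨c, hc, h.mono fun t ht => ⟨fun _ => ht, fun h => by linarith, fun h => by linarith⟩⟩
  · refine ⟨1 / 2, by norm_num, (eventually_gt_atTop 0).mono fun t ht => ?_⟩
    exact ⟨fun h => by linarith, fun _ => half_log_le_setIntegral_one_add_rpow_neg_one ht,
      fun h => by linarith⟩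
  · obtain ⟨c, hc, h⟩ := exists_eventually_le_setIntegral_of_one_lt hγ
    exact ⟨c, hc, h.mono fun t ht => ⟨fun h => by linarith, fun h => by linarith, fun _ => ht⟩⟩

section Exponents

variable {N : ℕ} {α β : ℝ}

lemma thetaV_pos (hα0 : 0 < α) (hβ0 : 0 < β) : 0 < thetaV α β := by
  unfold thetaV; positivity

lemma sigmaStar_pos (hα0 : 0 < α) (hα1 : α < 1) (hβ0 : 0 < β) : 0 < sigmaStar N α β := by
  have := thetaV_pos hα0 hβ0
  unfold sigmaStar; nlinarith [(Nat.cast_nonneg N : (0 : ℝ) ≤ N)]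

lemma neg_sigmaStar_add_thetaV_mul (hβ0 : β ≠ 0) :
    -sigmaStar N α β + thetaV α β * (N + 2 * β) = 2 * α - 1 := by
  unfold sigmaStar thetaV; field_simp; ring

lemma neg_sigmaP (p : ℝ≥0∞) :
    -sigmaP N α β p = -sigmaStar N α β + N * thetaV α β * (1 / p.toReal) := by
  unfold sigmaP; ring

end Exponents

section Annulus

variable {E : Type*} [NormedAddCommGroup E] {g : E → ℝ} {a b : ℝ}

lemma isCompact_annulus [ProperSpace E] (a b : ℝ) :
    IsCompact (Metric.closedBall (0 : E) b \ Metric.ball 0 a) :=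
  (isCompact_closedBall _ _).diff Metric.isOpen_ball

lemma mem_annulus {ξ : E} :
    ξ ∈ Metric.closedBall (0 : E) b \ Metric.ball 0 a ↔ a ≤ ‖ξ‖ ∧ ‖ξ‖ ≤ b := by
  rw [Set.mem_sdiff, mem_closedBall_zero_iff, mem_ball_zero_iff, not_lt, and_comm]

lemma annulus_subset_compl_zero (ha : 0 < a) :
    Metric.closedBall (0 : E) b \ Metric.ball 0 a ⊆ {0}ᶜ := fun ξ hξ h => by
  rw [mem_singleton_iff.mp h, mem_annulus, norm_zero] at hξ
  linarith [hξ.1]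

lemma exists_pos_le_on_annulus [ProperSpace E] (hg : ContinuousOn g {0}ᶜ)
    (hpos : ∀ ξ, ξ ≠ 0 → 0 < g ξ) (ha : 0 < a) : ∃ m > 0, ∀ ξ, a ≤ ‖ξ‖ → ‖ξ‖ ≤ b → m ≤ g ξ := by
  obtain ⟨m, hm, hle⟩ := (isCompact_annulus a b).exists_forall_le'
    (hg.mono (annulus_subset_compl_zero ha)) fun ξ hξ => hpos ξ (annulus_subset_compl_zero ha hξ)
  exact ⟨m, hm, fun ξ h₁ h₂ => hle ξ (mem_annulus.mpr ⟨h₁, h₂⟩)⟩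

lemma exists_le_on_annulus [ProperSpace E] (hg : ContinuousOn g {0}ᶜ) (ha : 0 < a) :
    ∃ M ≥ 0, ∀ ξ, a ≤ ‖ξ‖ → ‖ξ‖ ≤ b → g ξ ≤ M := by
  obtain ⟨M, hM⟩ := (isCompact_annulus a b).exists_bound_of_continuousOn
    (hg.mono (annulus_subset_compl_zero ha))
  exact ⟨max M 0, le_max_right _ _, fun ξ h₁ h₂ =>
    ((le_abs_self _).trans (hM ξ (mem_annulus.mpr ⟨h₁, h₂⟩))).trans (le_max_left _ _)⟩

end Annulus

section Kernel

variable {N : ℕ} {α β : ℝ} {G : Euc N → ℝ}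

lemma kernelY_nonneg (hGpos : ∀ ξ : Euc N, ξ ≠ 0 → 0 < G ξ) {z : Euc N} (hz : z ≠ 0) {r : ℝ}
    (hr : 0 < r) : 0 ≤ kernelY N α β G z r :=
  mul_nonneg (rpow_nonneg hr.le _) (hGpos _ (smul_ne_zero (rpow_pos_of_pos hr _).ne' hz)).le

lemma kernelY_mul_indicator_nonneg (hGpos : ∀ ξ : Euc N, ξ ≠ 0 → 0 < G ξ) {x : Euc N}
    (hx : 1 ≤ ‖x‖) {h : ℝ → ℝ} {s t : ℝ} (hst : s < t) (hs : 0 ≤ h s) (y : Euc N) :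
    0 ≤ kernelY N α β G (x - y) (t - s) * (Metric.ball 0 1).indicator (fun _ => h s) y := by
  by_cases hy : y ∈ Metric.ball 0 1
  · have hxy : x - y ≠ 0 := fun h0 => by
      rw [← sub_eq_zero.mp h0, mem_ball_zero_iff] at hy; linarith
    rw [indicator_of_mem hy]
    exact mul_nonneg (kernelY_nonneg hGpos hxy (sub_pos.mpr hst)) hs
  · rw [indicator_of_notMem hy, mul_zero]

lemma mul_rpow_le_kernelY (hσ : 0 ≤ sigmaStar N α β) {m r t : ℝ} {z : Euc N} (hm : 0 ≤ m)
    (hr : 0 < r) (hrt : r ≤ t) (hmG : m ≤ G (r ^ (-thetaV α β) • z)) :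
    m * t ^ (-sigmaStar N α β) ≤ kernelY N α β G z r := by
  rw [kernelY, mul_comm m]
  exact mul_le_mul (rpow_le_rpow_of_nonpos hr hrt (neg_nonpos.mpr hσ)) hmG hm (by positivity)

/-- The decay `G ξ ≤ C₁ ‖ξ‖^{-(N+2β)}` makes the kernel integrable in time near `r = 0`, while a
small similarity variable `r^{-θ} z` forces `r ≥ 1`. -/
lemma kernelY_le (hα0 : 0 < α) (hα1 : α < 1) (hβ0 : 0 < β) {C₁ : ℝ} (hC₁ : 0 ≤ C₁)
    (hGpos : ∀ ξ : Euc N, ξ ≠ 0 → 0 < G ξ)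
    (hGout : ∀ ξ : Euc N, 1 ≤ ‖ξ‖ → G ξ ≤ C₁ * ‖ξ‖ ^ (-((N : ℝ) + 2 * β)))
    {a M : ℝ} (hM0 : 0 ≤ M) (hM : ∀ ξ : Euc N, a ≤ ‖ξ‖ → ‖ξ‖ ≤ 1 → G ξ ≤ M)
    {z : Euc N} (hz : 1 ≤ ‖z‖) {r : ℝ} (hr : 0 < r) (ha : a ≤ ‖r ^ (-thetaV α β) • z‖) :
    kernelY N α β G z r ≤ M + C₁ * r ^ (2 * α - 1) := by
  set θ := thetaV α β
  set σ := sigmaStar N α β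
  have hθ : 0 < θ := thetaV_pos hα0 hβ0
  have hnorm : ‖r ^ (-θ) • z‖ = r ^ (-θ) * ‖z‖ := by
    rw [norm_smul, norm_of_nonneg (rpow_nonneg hr.le _)]
  have hrσ : 0 ≤ r ^ (-σ) := rpow_nonneg hr.le _
  rcases le_or_gt 1 ‖r ^ (-θ) • z‖ with hξ | hξ
  · have hdecay : ‖r ^ (-θ) • z‖ ^ (-((N : ℝ) + 2 * β)) ≤ r ^ (θ * (N + 2 * β)) := by
      rw [hnorm, mul_rpow (rpow_nonneg hr.le _) (by linarith), ← rpow_mul hr.le, neg_mul_neg]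
      exact mul_le_of_le_one_right (rpow_nonneg hr.le _)
        (rpow_le_one_of_one_le_of_nonpos hz (by linarith [(Nat.cast_nonneg N : (0 : ℝ) ≤ N)]))
    calc kernelY N α β G z r ≤ r ^ (-σ) * (C₁ * r ^ (θ * (N + 2 * β))) :=
          mul_le_mul_of_nonneg_left ((hGout _ hξ).trans (by gcongr)) hrσ
      _ = C₁ * r ^ (2 * α - 1) := by
          rw [← neg_sigmaStar_add_thetaV_mul hβ0.ne', rpow_add hr]; ring
      _ ≤ M + C₁ * r ^ (2 * α - 1) := le_add_of_nonneg_left hM0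
  · have hr1 : 1 ≤ r := by
      by_contra! hr1
      have : 1 < r ^ (-θ) := one_lt_rpow_of_pos_of_lt_one_of_neg hr hr1 (by linarith)
      nlinarith
    have hG : G (r ^ (-θ) • z) ≤ M := hM _ ha hξ.le
    have hG0 : 0 ≤ G (r ^ (-θ) • z) := (hGpos _ (smul_ne_zero (rpow_pos_of_pos hr _).ne'
      (norm_pos_iff.mp (by linarith)))).le
    calc kernelY N α β G z r ≤ 1 * M :=
          mul_le_mul (rpow_le_one_of_one_le_of_nonpos hr1
            (by linarith [sigmaStar_pos (N := N) hα0 hα1 hβ0])) hG hG0 zero_le_one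
      _ ≤ M + C₁ * r ^ (2 * α - 1) := by
          rw [one_mul]; exact le_add_of_nonneg_right (by positivity)

end Kernel

lemma addHaar_closedBall_sdiff_ball {E : Type*} [NormedAddCommGroup E] [NormedSpace ℝ E]
    [MeasurableSpace E] [BorelSpace E] [FiniteDimensional ℝ E] (μ : Measure E)
    [μ.IsAddHaarMeasure] (x : E) {r R : ℝ} (hr : 0 < r) (hrR : r ≤ R) :
    μ (Metric.closedBall x R \ Metric.ball x r) =
      ENNReal.ofReal (R ^ Module.finrank ℝ E - r ^ Module.finrank ℝ E) * μ (Metric.ball 0 1) := by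
  rw [measure_sdiff (Metric.ball_subset_closedBall.trans (Metric.closedBall_subset_closedBall hrR))
      measurableSet_ball.nullMeasurableSet measure_ball_lt_top.ne,
    Measure.addHaar_closedBall μ x (hr.le.trans hrR), Measure.addHaar_ball_of_pos μ x hr,
    ← ENNReal.sub_mul fun _ _ => measure_ball_lt_top.ne, ENNReal.ofReal_sub _ (by positivity)]

lemma volume_closedBall_two_mul_sdiff_ball {N : ℕ} {ρ : ℝ} (hρ : 0 < ρ) :
    volume (Metric.closedBall (0 : Euc N) (2 * ρ) \ Metric.ball 0 ρ) =
      ENNReal.ofReal ((2 ^ N - 1) * volume.real (Metric.ball (0 : Euc N) 1) * ρ ^ N) := by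
  rw [addHaar_closedBall_sdiff_ball volume 0 hρ (by linarith), finrank_euclideanSpace_fin,
    ← ofReal_measureReal measure_ball_lt_top.ne,
    ← ENNReal.ofReal_mul (sub_nonneg.mpr (pow_le_pow_left₀ hρ.le (by linarith) N))]
  congr 1
  ring

lemma norm_rpow_smul_sub_mem_annulus {E : Type*} [NormedAddCommGroup E] [NormedSpace ℝ E]
    {θ ν t r : ℝ} (hθ : 0 < θ) (ht : 0 < t) (hνt : 2 ≤ ν * t ^ θ) {x y : E}
    (hx₁ : ν * t ^ θ ≤ ‖x‖) (hx₂ : ‖x‖ ≤ 2 * (ν * t ^ θ)) (hy : ‖y‖ < 1)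
    (hr₁ : t / 2 ≤ r) (hr₂ : r ≤ t) :
    ν / 2 ≤ ‖r ^ (-θ) • (x - y)‖ ∧ ‖r ^ (-θ) • (x - y)‖ ≤ 3 * 2 ^ θ * ν := by
  have hr : 0 < r := by linarith
  have hρinv : t ^ (-θ) * t ^ θ = 1 := by rw [← rpow_add ht, neg_add_cancel, rpow_zero]
  have hlow : t ^ (-θ) ≤ r ^ (-θ) := rpow_le_rpow_of_nonpos hr hr₂ (by linarith)
  have hup : r ^ (-θ) ≤ 2 ^ θ * t ^ (-θ) := by
    calc r ^ (-θ) ≤ (t / 2) ^ (-θ) := rpow_le_rpow_of_nonpos (by positivity) hr₁ (by linarith)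
      _ = 2 ^ θ * t ^ (-θ) := by
        rw [div_rpow ht.le zero_le_two, rpow_neg zero_le_two, div_inv_eq_mul, mul_comm]
  have hxy₁ : ν * t ^ θ / 2 ≤ ‖x - y‖ := by linarith [norm_sub_norm_le x y]
  have hxy₂ : ‖x - y‖ ≤ 3 * ν * t ^ θ := by linarith [norm_sub_le x y]
  rw [norm_smul, norm_of_nonneg (rpow_nonneg hr.le _)]
  constructor
  · calc ν / 2 = t ^ (-θ) * (ν * t ^ θ / 2) := by linear_combination (-(ν / 2)) * hρinv
      _ ≤ r ^ (-θ) * ‖x - y‖ := by gcongr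
  · calc r ^ (-θ) * ‖x - y‖ ≤ 2 ^ θ * t ^ (-θ) * (3 * ν * t ^ θ) := by gcongr
      _ = 3 * 2 ^ θ * ν := by linear_combination (3 * 2 ^ θ * ν) * hρinv

lemma ofReal_mul_rpow_le_eLpNorm {X : Type*} [MeasurableSpace X] {μ : Measure X} {p : ℝ≥0∞}
    (hp : p ≠ 0) {A S : Set X} (hA : MeasurableSet A) (hAS : A ⊆ S) (hμA : μ A ≠ 0)
    {f : X → ℝ} {c : ℝ} (hc : 0 ≤ c) (hf : ∀ x ∈ A, c ≤ f x) :
    ENNReal.ofReal c * μ A ^ (1 / p.toReal) ≤ eLpNorm f p (μ.restrict S) := by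
  have hμSA : μ.restrict S A = μ A := Measure.restrict_eq_self μ hAS
  rw [← hμSA, ← Real.enorm_eq_ofReal hc, ← eLpNorm_indicator_const' hA (hμSA ▸ hμA) hp]
  refine eLpNorm_mono fun x => ?_
  by_cases hx : x ∈ A
  · rw [indicator_of_mem hx, norm_of_nonneg hc]
    exact (hf x hx).trans (le_abs_self _)
  · rw [indicator_of_notMem hx, norm_zero]
    exact norm_nonneg _

section MildSolution

variable {N : ℕ} {α β : ℝ} {G : Euc N → ℝ}

lemma integrableOn_sub_rpow {t : ℝ} (ht : 0 ≤ t) {r : ℝ} (hr : -1 < r) :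
    IntegrableOn (fun s => (t - s) ^ r) (Ioo 0 t) := by
  have h := (intervalIntegral.intervalIntegrable_rpow' (a := 0) (b := t) hr).comp_sub_left t
  rw [sub_zero, sub_self] at h
  exact (intervalIntegrable_iff_integrableOn_Ioo_of_le ht).mp h.symm

lemma integrable_kernelY_mul_indicator (hα0 : 0 < α) (hα1 : α < 1) (hβ0 : 0 < β)
    (hGcont : ContinuousOn G {0}ᶜ) (hGpos : ∀ ξ : Euc N, ξ ≠ 0 → 0 < G ξ) {C₁ : ℝ}
    (hC₁ : 0 ≤ C₁) (hGout : ∀ ξ : Euc N, 1 ≤ ‖ξ‖ → G ξ ≤ C₁ * ‖ξ‖ ^ (-((N : ℝ) + 2 * β)))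
    {h : ℝ → ℝ} {t : ℝ} (ht : 0 < t) (hh : ContinuousOn h (Icc 0 t)) {x : Euc N}
    (hx : 2 ≤ ‖x‖) :
    Integrable (fun q : ℝ × Euc N =>
        kernelY N α β G (x - q.2) (t - q.1) * (Metric.ball 0 1).indicator (fun _ => h q.1) q.2)
      ((volume.restrict (Ioo 0 t)).prod volume) := by
  set θ := thetaV α β
  obtain ⟨M, hM0, hM⟩ := exists_le_on_annulus (b := 1) hGcont (rpow_pos_of_pos ht (-θ))
  obtain ⟨H, hH⟩ := isCompact_Icc.exists_bound_of_continuousOn hh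
  have hGmeas : Measurable G := measurable_of_continuousOn_compl_singleton 0 hGcont
  have hker : Measurable fun q : ℝ × Euc N => kernelY N α β G (x - q.2) (t - q.1) := by
    unfold kernelY; fun_prop
  have hforce : AEStronglyMeasurable
      (fun q : ℝ × Euc N => (Metric.ball 0 1).indicator (fun _ => h q.1) q.2)
      ((volume.restrict (Ioo 0 t)).prod volume) :=
    ((hh.mono Ioo_subset_Icc_self).aestronglyMeasurable measurableSet_Ioo).comp_fst.indicator
      (measurableSet_ball.preimage measurable_snd)
  have htime : Integrable (fun s => (M + C₁ * (t - s) ^ (2 * α - 1)) * H)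
      (volume.restrict (Ioo 0 t)) :=
    ((integrableOn_const measure_Ioo_lt_top.ne).add
      ((integrableOn_sub_rpow ht.le (by linarith)).const_mul C₁)).mul_const H
  have hball : Integrable ((Metric.ball (0 : Euc N) 1).indicator fun _ => (1 : ℝ)) :=
    (integrable_indicator_iff measurableSet_ball).mpr (integrableOn_const measure_ball_lt_top.ne)
  refine (htime.mul_prod hball).mono' (hker.aestronglyMeasurable.mul hforce) ?_
  filter_upwards [Measure.quasiMeasurePreserving_fst.ae (ae_restrict_mem measurableSet_Ioo)]
    with ⟨s, y⟩ ⟨hs0, hst⟩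
  by_cases hy : y ∈ Metric.ball 0 1
  · rw [mem_ball_zero_iff] at hy
    have hr : 0 < t - s := sub_pos.mpr hst
    have hxy : 1 ≤ ‖x - y‖ := by linarith [norm_sub_norm_le x y]
    have ha : t ^ (-θ) ≤ ‖(t - s) ^ (-θ) • (x - y)‖ := by
      rw [norm_smul, norm_of_nonneg (rpow_nonneg hr.le _)]
      calc t ^ (-θ) ≤ (t - s) ^ (-θ) * 1 := by
            rw [mul_one]
            exact rpow_le_rpow_of_nonpos hr (by linarith) (by linarith [thetaV_pos hα0 hβ0])
        _ ≤ (t - s) ^ (-θ) * ‖x - y‖ := by gcongr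
    simp only [indicator_of_mem (mem_ball_zero_iff.mpr hy), mul_one, norm_mul]
    rw [norm_of_nonneg (kernelY_nonneg hGpos (norm_pos_iff.mp (by linarith)) hr)]
    exact mul_le_mul (kernelY_le hα0 hα1 hβ0 hC₁ hGpos hGout hM0 hM hxy hr ha)
      (hH s ⟨hs0.le, hst.le⟩) (norm_nonneg _) (by positivity)
  · simp [indicator_of_notMem hy]

lemma le_mildSol (hα0 : 0 < α) (hα1 : α < 1) (hβ0 : 0 < β)
    (hGcont : ContinuousOn G {0}ᶜ) (hGpos : ∀ ξ : Euc N, ξ ≠ 0 → 0 < G ξ) {C₁ : ℝ}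
    (hC₁ : 0 ≤ C₁) (hGout : ∀ ξ : Euc N, 1 ≤ ‖ξ‖ → G ξ ≤ C₁ * ‖ξ‖ ^ (-((N : ℝ) + 2 * β)))
    {ν m : ℝ} (hm0 : 0 ≤ m)
    (hm : ∀ ξ : Euc N, ν / 2 ≤ ‖ξ‖ → ‖ξ‖ ≤ 3 * 2 ^ thetaV α β * ν → m ≤ G ξ)
    {h : ℝ → ℝ} {t : ℝ} (ht : 0 < t) (hh : ContinuousOn h (Icc 0 t))
    (hh0 : ∀ s ∈ Icc 0 t, 0 ≤ h s) (hνt : 2 ≤ ν * t ^ thetaV α β) {x : Euc N}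
    (hx₁ : ν * t ^ thetaV α β ≤ ‖x‖) (hx₂ : ‖x‖ ≤ 2 * (ν * t ^ thetaV α β)) :
    m * volume.real (Metric.ball (0 : Euc N) 1) * t ^ (-sigmaStar N α β) *
        ∫ s in Ioo 0 (t / 2), h s ≤
      mildSol N α β G (fun y s => (Metric.ball 0 1).indicator (fun _ => h s) y) x t := by
  set F := fun q : ℝ × Euc N =>
    kernelY N α β G (x - q.2) (t - q.1) * (Metric.ball 0 1).indicator (fun _ => h q.1) q.2
  set c := m * t ^ (-sigmaStar N α β)
  have hF : Integrable F ((volume.restrict (Ioo 0 t)).prod volume) :=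
    integrable_kernelY_mul_indicator hα0 hα1 hβ0 hGcont hGpos hC₁ hGout ht hh (hνt.trans hx₁)
  have hF_ge : ∀ s ∈ Ioo 0 (t / 2), ∀ y,
      (Metric.ball 0 1).indicator (fun _ => c * h s) y ≤ F (s, y) := by
    intro s ⟨hs0, hst⟩ y
    by_cases hy : y ∈ Metric.ball 0 1
    · have hξ := norm_rpow_smul_sub_mem_annulus (thetaV_pos hα0 hβ0) ht hνt hx₁ hx₂
        (mem_ball_zero_iff.mp hy) (r := t - s) (by linarith) (by linarith)
      simp only [F, indicator_of_mem hy]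
      exact mul_le_mul_of_nonneg_right
        (mul_rpow_le_kernelY (sigmaStar_pos hα0 hα1 hβ0).le hm0 (by linarith) (by linarith)
          (hm _ hξ.1 hξ.2))
        (hh0 s ⟨hs0.le, by linarith⟩)
    · simp [F, indicator_of_notMem hy]
  have hsub : Ioo 0 (t / 2) ⊆ Ioo 0 t := Ioo_subset_Ioo_right (by linarith)
  have hinner : IntegrableOn (fun s => ∫ y, F (s, y)) (Ioo 0 t) := hF.integral_prod_left
  have hslice : ∀ᵐ s ∂volume.restrict (Ioo 0 (t / 2)), Integrable fun y => F (s, y) :=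
    ae_restrict_of_ae_restrict_of_subset hsub hF.prod_right_ae
  have hh_int : IntegrableOn h (Ioo 0 (t / 2)) :=
    hh.integrableOn_Icc.mono_set (Ioo_subset_Icc_self.trans (Icc_subset_Icc_right (by linarith)))
  calc m * volume.real (Metric.ball (0 : Euc N) 1) * t ^ (-sigmaStar N α β) *
        ∫ s in Ioo 0 (t / 2), h s
      = ∫ s in Ioo 0 (t / 2), volume.real (Metric.ball (0 : Euc N) 1) * (c * h s) := by
        rw [integral_const_mul, integral_const_mul]; ring
    _ ≤ ∫ s in Ioo 0 (t / 2), ∫ y, F (s, y) := by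
        refine integral_mono_ae ((hh_int.const_mul c).const_mul _) (hinner.mono_set hsub) ?_
        filter_upwards [hslice, ae_restrict_mem measurableSet_Ioo] with s hs hs'
        rw [← smul_eq_mul, ← integral_indicator_const _ measurableSet_ball]
        exact integral_mono ((integrable_indicator_iff measurableSet_ball).mpr
          (integrableOn_const measure_ball_lt_top.ne)) hs (hF_ge s hs')
    _ ≤ ∫ s in Ioo 0 t, ∫ y, F (s, y) :=
        setIntegral_mono_set hinner
          ((ae_restrict_mem measurableSet_Ioo).mono fun s hs =>
            integral_nonneg (kernelY_mul_indicator_nonneg hGpos (by linarith) hs.2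
              (hh0 s ⟨hs.1.le, hs.2.le⟩)))
          hsub.eventuallyLE
    _ = _ := rfl

end MildSolution

lemma exists_ofReal_le_eLpNorm_mildSol {N : ℕ} (hN : 1 ≤ N) {α β : ℝ} (hα0 : 0 < α)
    (hα1 : α < 1) (hβ0 : 0 < β) {G : Euc N → ℝ} (hGcont : ContinuousOn G {0}ᶜ)
    (hGpos : ∀ ξ : Euc N, ξ ≠ 0 → 0 < G ξ) {C₁ : ℝ} (hC₁ : 0 ≤ C₁)
    (hGout : ∀ ξ : Euc N, 1 ≤ ‖ξ‖ → G ξ ≤ C₁ * ‖ξ‖ ^ (-((N : ℝ) + 2 * β)))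
    {h : ℝ → ℝ} (hh : ContinuousOn h (Ici 0)) (hh0 : ∀ s, 0 ≤ s → 0 ≤ h s)
    {p : ℝ≥0∞} (hp : p ≠ 0) {ν : ℝ} (hν : 0 < ν) :
    ∃ c₀ > (0 : ℝ), ∀ᶠ t : ℝ in atTop,
      ENNReal.ofReal (c₀ * t ^ (-sigmaP N α β p) * ∫ s in Ioo 0 (t / 2), h s) ≤
        eLpNorm (fun x => mildSol N α β G
            (fun y s => (Metric.ball (0 : Euc N) 1).indicator (fun _ => h s) y) x t) p
          (volume.restrict {x : Euc N | ν * t ^ thetaV α β ≤ ‖x‖}) := by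
  set θ := thetaV α β
  set e := 1 / p.toReal
  have hθ : 0 < θ := thetaV_pos hα0 hβ0
  obtain ⟨m, hm, hmG⟩ := exists_pos_le_on_annulus (b := 3 * 2 ^ θ * ν) hGcont hGpos (half_pos hν)
  set V := volume.real (Metric.ball (0 : Euc N) 1)
  have hV : 0 < V :=
    ENNReal.toReal_pos (Metric.measure_ball_pos _ _ one_pos).ne' measure_ball_lt_top.ne
  set κ := ((2 : ℝ) ^ N - 1) * V * ν ^ N
  have hκ : 0 < κ := by
    have : (1 : ℝ) < 2 ^ N := one_lt_pow₀ one_lt_two (by omega)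
    have := pow_pos hν N
    positivity
  refine ⟨m * V * κ ^ e, by positivity, ?_⟩
  have hlarge : ∀ᶠ t : ℝ in atTop, 2 ≤ ν * t ^ θ :=
    ((tendsto_rpow_atTop hθ).const_mul_atTop hν).eventually_ge_atTop 2
  filter_upwards [hlarge, eventually_gt_atTop 0] with t hνt ht
  have hvol : volume (Metric.closedBall (0 : Euc N) (2 * (ν * t ^ θ)) \ Metric.ball 0 (ν * t ^ θ))
      = ENNReal.ofReal (κ * t ^ (N * θ)) := by
    rw [volume_closedBall_two_mul_sdiff_ball (by linarith), mul_pow, ← rpow_natCast (t ^ θ),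
      ← rpow_mul ht.le, mul_comm θ]
    congr 1
    ring
  have hI : 0 ≤ ∫ s in Ioo 0 (t / 2), h s :=
    setIntegral_nonneg measurableSet_Ioo fun s hs => hh0 s hs.1.le
  have hle := ofReal_mul_rpow_le_eLpNorm hp
    (measurableSet_closedBall.diff measurableSet_ball) (S := {x : Euc N | ν * t ^ θ ≤ ‖x‖})
    (fun x hx => (mem_annulus.mp hx).1)
    (by rw [hvol]; exact ENNReal.ofReal_pos.mpr (by positivity) |>.ne')
    (by have := rpow_pos_of_pos ht (-sigmaStar N α β); positivity)
    fun x hx => le_mildSol hα0 hα1 hβ0 hGcont hGpos hC₁ hGout hm.le hmG ht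
      (hh.mono Icc_subset_Ici_self) (fun s hs => hh0 s hs.1) hνt (mem_annulus.mp hx).1
      (mem_annulus.mp hx).2
  convert hle using 1
  rw [hvol, ENNReal.ofReal_rpow_of_nonneg (by positivity) (by positivity),
    ← ENNReal.ofReal_mul (by have := rpow_pos_of_pos ht (-sigmaStar N α β); positivity)]
  congr 1
  rw [mul_rpow hκ.le (by positivity), ← rpow_mul ht.le, neg_sigmaP, rpow_add ht]
  ring

theorem exterior_lower_optimal_general
    (N : ℕ) (hN : 1 ≤ N) (α β : ℝ) (hα0 : 0 < α) (hα1 : α < 1)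
    (hβ0 : 0 < β)
    (G : Euc N → ℝ) (C₁ : ℝ) (hC₁ : 0 < C₁)
    (hGcont : ContinuousOn G {(0 : Euc N)}ᶜ)
    (hGpos : ∀ ξ : Euc N, ξ ≠ 0 → 0 < G ξ)
    (hGout : ∀ ξ : Euc N, 1 ≤ ‖ξ‖ → G ξ ≤ C₁ * ‖ξ‖ ^ (-((N : ℝ) + 2 * β)))
    (γ : ℝ)
    (p : ℝ≥0∞) (hp1 : 1 ≤ p) :
    ∀ ν : ℝ, 0 < ν → ∃ c T : ℝ, 0 < c ∧ 2 ≤ T ∧ ∀ t : ℝ, T ≤ t →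
      (γ < 1 → ENNReal.ofReal (c * t ^ (-sigmaP N α β p + 1 - γ)) ≤ eLpNorm (fun x => mildSol N α β G (fun (y : Euc N) (s : ℝ) => Set.indicator (Metric.ball (0 : Euc N) 1) (fun _ => (1 + s) ^ (-γ)) y) x t) p
          (volume.restrict {x : Euc N | ν * t ^ thetaV α β ≤ ‖x‖})) ∧
      (γ = 1 → ENNReal.ofReal (c * t ^ (-sigmaP N α β p) * Real.log t) ≤ eLpNorm (fun x => mildSol N α β G (fun (y : Euc N) (s : ℝ) => Set.indicator (Metric.ball (0 : Euc N) 1) (fun _ => (1 + s) ^ (-γ)) y) x t) p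
          (volume.restrict {x : Euc N | ν * t ^ thetaV α β ≤ ‖x‖})) ∧
      (1 < γ → ENNReal.ofReal (c * t ^ (-sigmaP N α β p)) ≤ eLpNorm (fun x => mildSol N α β G (fun (y : Euc N) (s : ℝ) => Set.indicator (Metric.ball (0 : Euc N) 1) (fun _ => (1 + s) ^ (-γ)) y) x t) p
          (volume.restrict {x : Euc N | ν * t ^ thetaV α β ≤ ‖x‖})) := by
  intro ν hν
  have hh : ContinuousOn (fun s : ℝ => (1 + s) ^ (-γ)) (Ici 0) :=
    ContinuousOn.rpow_const (f := fun s => 1 + s) (by fun_prop) fun s hs =>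
      Or.inl (by linarith [mem_Ici.mp hs] : (0 : ℝ) < 1 + s).ne'
  obtain ⟨c₀, hc₀, hL⟩ := exists_ofReal_le_eLpNorm_mildSol hN hα0 hα1 hβ0 hGcont hGpos hC₁.le
    hGout hh (fun s hs => (rpow_pos_of_pos (by linarith) _).le) (one_pos.trans_le hp1).ne' hν
  obtain ⟨c, hc, hI⟩ := exists_lower_bound_setIntegral_one_add_rpow_neg γ
  obtain ⟨T, hT⟩ := eventually_atTop.mp (hL.and (hI.and (eventually_gt_atTop 0)))
  refine ⟨c₀ * c, max T 2, by positivity, le_max_right _ _, fun t ht => ?_⟩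
  obtain ⟨hLt, ⟨hI₁, hI₂, hI₃⟩, ht0⟩ := hT t (le_of_max_le_left ht)
  have hmono : ∀ a, a ≤ ∫ s in Ioo 0 (t / 2), (1 + s) ^ (-γ) →
      ENNReal.ofReal (c₀ * t ^ (-sigmaP N α β p) * a) ≤ _ := fun a ha =>
    (ENNReal.ofReal_le_ofReal (by have := rpow_pos_of_pos ht0 (-sigmaP N α β p); gcongr)).trans hLt
  refine ⟨fun hγ => ?_, fun hγ => ?_, fun hγ => ?_⟩
  · convert hmono _ (hI₁ hγ) using 2
    rw [add_sub_assoc, rpow_add ht0]; ring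
  · convert hmono _ (hI₂ hγ) using 2; ring
  · convert hmono _ (hI₃ hγ) using 2; ring

theorem exterior_lower_optimal
    (N : ℕ) (hN : 1 ≤ N) (α β : ℝ) (hα0 : 0 < α) (hα1 : α < 1)
    (hβ0 : 0 < β) (hβ1 : β ≤ 1) (hNβ : (N : ℝ) ≤ 4 * β)
    (G : Euc N → ℝ) (C₁ : ℝ) (hC₁ : 0 < C₁)
    (hGcont : ContinuousOn G {(0 : Euc N)}ᶜ)
    (hGpos : ∀ ξ : Euc N, ξ ≠ 0 → 0 < G ξ)
    (hGin₁ : (N : ℝ) < 4 * β → ∀ ξ : Euc N, ξ ≠ 0 → ‖ξ‖ ≤ 1 → G ξ ≤ C₁)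
    (hGin₂ : (N : ℝ) = 4 * β → ∀ ξ : Euc N, ξ ≠ 0 → ‖ξ‖ ≤ 1 →
      G ξ ≤ C₁ * (1 + |Real.log ‖ξ‖|))
    (hGout : ∀ ξ : Euc N, 1 ≤ ‖ξ‖ → G ξ ≤ C₁ * ‖ξ‖ ^ (-((N : ℝ) + 2 * β)))
    (c₁ : ℝ) (hc₁ : 0 < c₁)
    (hGlow₁ : (N : ℝ) < 4 * β → ∀ ξ : Euc N, ξ ≠ 0 → ‖ξ‖ ≤ 1 → c₁ ≤ G ξ)
    (hGlow₂ : (N : ℝ) = 4 * β → ∀ ξ : Euc N, ξ ≠ 0 → ‖ξ‖ ≤ 1 →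
      c₁ * (1 + |Real.log ‖ξ‖|) ≤ G ξ)
    (γ : ℝ)
    (p : ℝ≥0∞) (hp1 : 1 ≤ p) :
    ∀ ν : ℝ, 0 < ν → ∃ c T : ℝ, 0 < c ∧ 2 ≤ T ∧ ∀ t : ℝ, T ≤ t →
      (γ < 1 → ENNReal.ofReal (c * t ^ (-sigmaP N α β p + 1 - γ)) ≤ eLpNorm (fun x => mildSol N α β G (fun (y : Euc N) (s : ℝ) => Set.indicator (Metric.ball (0 : Euc N) 1) (fun _ => (1 + s) ^ (-γ)) y) x t) p
          (volume.restrict {x : Euc N | ν * t ^ thetaV α β ≤ ‖x‖})) ∧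
      (γ = 1 → ENNReal.ofReal (c * t ^ (-sigmaP N α β p) * Real.log t) ≤ eLpNorm (fun x => mildSol N α β G (fun (y : Euc N) (s : ℝ) => Set.indicator (Metric.ball (0 : Euc N) 1) (fun _ => (1 + s) ^ (-γ)) y) x t) p
          (volume.restrict {x : Euc N | ν * t ^ thetaV α β ≤ ‖x‖})) ∧
      (1 < γ → ENNReal.ofReal (c * t ^ (-sigmaP N α β p)) ≤ eLpNorm (fun x => mildSol N α β G (fun (y : Euc N) (s : ℝ) => Set.indicator (Metric.ball (0 : Euc N) 1) (fun _ => (1 + s) ^ (-γ)) y) x t) p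
          (volume.restrict {x : Euc N | ν * t ^ thetaV α β ≤ ‖x‖})) :=
  exterior_lower_optimal_general N hN α β hα0 hα1 hβ0 G C₁ hC₁ hGcont hGpos hGout γ p hp1
end
end

section
/- Suppose N < 2β. Let γ ∈ ℝ, let p ∈ [1,∞] (every such p is subcritical in this regime), and let f be measurable with ∫_{ℝ^N} |f(y,t)| dy ≤ C₀ (1+t)^{-γ} for all t > 0 and some C₀ > 0. Then for every compact set K ⊂ ℝ^N there exist C > 0 and T ≥ 2 such that for all t ≥ T the mild solution u satisfies: ‖u(·,t)‖_{L^p(K)} ≤ C t^{-σ*+1-γ} if γ < 1; ≤ C t^{-σ*} log t if γ = 1; and ≤ C t^{-σ*} if γ > 1. -/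
open MeasureTheory Real Set Pointwise
open scoped ENNReal

noncomputable section

/-!
Since `N < 2β`, the bounds on `G` make it bounded, and `σ* < 1`. Hence
`|u(x,t)| ≤ C₁ C₀ ∫₀ᵗ (t-s)^{-σ*} (1+s)^{-γ} ds` uniformly in `x`, and on a compact set the `L^p`
norm is at most a constant times this sup bound. The time integral is estimated by splitting at
`t/2`: on `[0,t/2]` the kernel factor is `≲ t^{-σ*}` and `∫ (1+s)^{-γ}` grows like `t^{1-γ}`,
`log t` or `1` according to `γ`; on `[t/2,t]` the forcing factor is `≲ t^{-γ}` and the kernel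
factor integrates to `≲ t^{1-σ*}`.
-/

open intervalIntegral

def timeConv (σ γ t : ℝ) : ℝ := ∫ s in (0 : ℝ)..t, (t - s) ^ (-σ) * (1 + s) ^ (-γ)

section TimeConv

variable {σ γ t : ℝ}

lemma continuousOn_one_add_rpow (γ : ℝ) :
    ContinuousOn (fun s : ℝ => (1 + s) ^ (-γ)) (Ici 0) :=
  (continuous_const.add continuous_id).continuousOn.rpow_const fun s (hs : 0 ≤ s) =>
    Or.inl (by linarith : 0 < 1 + s).ne'

lemma intervalIntegrable_timeConv_integrand (hσ : σ < 1) (ht : 0 ≤ t) {a b : ℝ}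
    (hab : uIcc a b ⊆ uIcc 0 t) :
    IntervalIntegrable (fun s => (t - s) ^ (-σ) * (1 + s) ^ (-γ)) volume a b := by
  have hkernel : IntervalIntegrable (fun s : ℝ => (t - s) ^ (-σ)) volume 0 t := by
    simpa using
      (intervalIntegrable_rpow' (a := t) (b := 0) (r := -σ) (by linarith)).comp_sub_left t
  refine (hkernel.mono_set hab).mul_continuousOn ((continuousOn_one_add_rpow γ).mono ?_)
  intro s hs
  have := hab hs
  rw [uIcc_of_le ht] at this
  exact this.1

lemma half_rpow_neg (ht : 0 ≤ t) (σ : ℝ) : (t / 2) ^ (-σ) = 2 ^ σ * t ^ (-σ) := by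
  rw [div_rpow ht (by norm_num), rpow_neg (by norm_num : (0 : ℝ) ≤ 2)]
  field_simp

lemma integral_timeConv_integrand_first_half_le (hσ0 : 0 ≤ σ) (hσ1 : σ < 1) (ht : 0 < t) :
    ∫ s in (0 : ℝ)..t / 2, (t - s) ^ (-σ) * (1 + s) ^ (-γ) ≤
      2 ^ σ * t ^ (-σ) * ∫ u in (1 : ℝ)..1 + t / 2, u ^ (-γ) := by
  have ht2 : 0 ≤ t / 2 := by positivity
  have hforcing : ContinuousOn (fun s : ℝ => (1 + s) ^ (-γ)) (uIcc 0 (t / 2)) :=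
    (continuousOn_one_add_rpow γ).mono (by rw [uIcc_of_le ht2]; exact fun s hs => hs.1)
  calc ∫ s in (0 : ℝ)..t / 2, (t - s) ^ (-σ) * (1 + s) ^ (-γ)
      ≤ ∫ s in (0 : ℝ)..t / 2, (t / 2) ^ (-σ) * (1 + s) ^ (-γ) := by
        refine integral_mono_on ht2
          (intervalIntegrable_timeConv_integrand hσ1 ht.le ?_)
          (hforcing.intervalIntegrable.const_mul _) fun s hs => ?_
        · rw [uIcc_of_le ht2, uIcc_of_le ht.le]
          exact Icc_subset_Icc le_rfl (by linarith)
        · exact mul_le_mul_of_nonneg_right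
            (rpow_le_rpow_of_nonpos (by positivity) (by linarith [hs.2]) (by linarith))
            (rpow_nonneg (by linarith [hs.1]) _)
    _ = 2 ^ σ * t ^ (-σ) * ∫ u in (1 : ℝ)..1 + t / 2, u ^ (-γ) := by
        rw [intervalIntegral.integral_const_mul, half_rpow_neg ht.le]
        simpa using congrArg (2 ^ σ * t ^ (-σ) * ·)
          (integral_comp_add_left (a := 0) (b := t / 2) (fun u : ℝ => u ^ (-γ)) 1)

lemma one_add_rpow_neg_le (ht : 1 ≤ t) {s : ℝ} (hs : s ∈ Icc (t / 2) t) :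
    (1 + s) ^ (-γ) ≤ 2 ^ |γ| * t ^ (-γ) := by
  rcases le_or_gt γ 0 with hγ | hγ
  · rw [abs_of_nonpos hγ, ← mul_rpow (by norm_num) (by linarith)]
    exact rpow_le_rpow (by linarith [hs.1]) (by linarith [hs.2]) (by linarith)
  · rw [abs_of_pos hγ, ← half_rpow_neg (by linarith)]
    exact rpow_le_rpow_of_nonpos (by linarith) (by linarith [hs.1]) (by linarith)

lemma integral_rpow_sub_half_self (hσ : σ < 1) :
    ∫ s in t / 2..t, (t - s) ^ (-σ) = (t / 2) ^ (1 - σ) / (1 - σ) := by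
  rw [integral_comp_sub_left (fun u : ℝ => u ^ (-σ)), sub_self, show t - t / 2 = t / 2 by ring,
    integral_rpow (Or.inl (by linarith)), zero_rpow (by linarith), show -σ + 1 = 1 - σ by ring,
    sub_zero]

lemma integral_timeConv_integrand_second_half_le (hσ1 : σ < 1) (ht : 1 ≤ t) :
    ∫ s in t / 2..t, (t - s) ^ (-σ) * (1 + s) ^ (-γ) ≤
      2 ^ |γ| / (1 - σ) * t ^ (1 - σ - γ) := by
  have ht0 : 0 < t := by linarith
  have hkernel : IntervalIntegrable (fun s : ℝ => (t - s) ^ (-σ)) volume (t / 2) t := by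
    simpa [show t - t / 2 = t / 2 by ring] using
      (intervalIntegrable_rpow' (a := t / 2) (b := 0) (r := -σ) (by linarith)).comp_sub_left t
  calc ∫ s in t / 2..t, (t - s) ^ (-σ) * (1 + s) ^ (-γ)
      ≤ ∫ s in t / 2..t, 2 ^ |γ| * t ^ (-γ) * (t - s) ^ (-σ) := by
        refine integral_mono_on (by linarith) (intervalIntegrable_timeConv_integrand hσ1 ht0.le ?_)
          (hkernel.const_mul _) fun s hs => ?_
        · rw [uIcc_of_le (by linarith), uIcc_of_le ht0.le]
          exact Icc_subset_Icc (by positivity) le_rfl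
        · rw [mul_comm (2 ^ |γ| * t ^ (-γ))]
          exact mul_le_mul_of_nonneg_left (one_add_rpow_neg_le ht hs)
            (rpow_nonneg (by linarith [hs.2]) _)
    _ = 2 ^ |γ| * t ^ (-γ) * ((t / 2) ^ (1 - σ) / (1 - σ)) := by
        rw [intervalIntegral.integral_const_mul, integral_rpow_sub_half_self hσ1]
    _ ≤ 2 ^ |γ| * t ^ (-γ) * (t ^ (1 - σ) / (1 - σ)) := by
        gcongr
        linarith
    _ = 2 ^ |γ| / (1 - σ) * t ^ (1 - σ - γ) := by
        rw [show 1 - σ - γ = -γ + (1 - σ) by ring, rpow_add ht0]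
        ring

lemma timeConv_le (hσ0 : 0 ≤ σ) (hσ1 : σ < 1) (ht : 1 ≤ t) :
    timeConv σ γ t ≤
      2 ^ σ * t ^ (-σ) * (∫ u in (1 : ℝ)..1 + t / 2, u ^ (-γ)) +
        2 ^ |γ| / (1 - σ) * t ^ (1 - σ - γ) := by
  have ht0 : 0 < t := by linarith
  have hsub : ∀ a b : ℝ, 0 ≤ a → a ≤ b → b ≤ t → uIcc a b ⊆ uIcc 0 t :=
    fun a b ha hab hb => by
      rw [uIcc_of_le hab, uIcc_of_le ht0.le]
      exact Icc_subset_Icc ha hb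
  have ht2 : 0 ≤ t / 2 := by positivity
  rw [timeConv, ← integral_add_adjacent_intervals
    (intervalIntegrable_timeConv_integrand hσ1 ht0.le (hsub 0 _ le_rfl ht2 (by linarith)))
    (intervalIntegrable_timeConv_integrand hσ1 ht0.le (hsub _ t ht2 (by linarith) le_rfl))]
  exact add_le_add (integral_timeConv_integrand_first_half_le hσ0 hσ1 ht0)
    (integral_timeConv_integrand_second_half_le hσ1 ht)

lemma exists_timeConv_le_of_lt_one (hσ0 : 0 ≤ σ) (hσ1 : σ < 1) (hγ : γ < 1) :
    ∃ A > 0, ∀ t, 3 ≤ t → timeConv σ γ t ≤ A * t ^ (-σ + 1 - γ) := by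
  refine ⟨2 ^ σ / (1 - γ) + 2 ^ |γ| / (1 - σ), by
    have := sub_pos.2 hγ; have := sub_pos.2 hσ1; positivity, fun t ht => ?_⟩
  have ht0 : 0 < t := by linarith
  have hforcing : ∫ u in (1 : ℝ)..1 + t / 2, u ^ (-γ) ≤ t ^ (1 - γ) / (1 - γ) := by
    rw [integral_rpow (Or.inl (by linarith)), one_rpow, show -γ + 1 = 1 - γ by ring]
    refine div_le_div_of_nonneg_right ?_ (by linarith)
    have : (1 + t / 2) ^ (1 - γ) ≤ t ^ (1 - γ) :=
      rpow_le_rpow (by linarith) (by linarith) (by linarith)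
    linarith
  calc timeConv σ γ t
      ≤ 2 ^ σ * t ^ (-σ) * (t ^ (1 - γ) / (1 - γ)) +
          2 ^ |γ| / (1 - σ) * t ^ (1 - σ - γ) := by
        grw [timeConv_le hσ0 hσ1 (by linarith), hforcing]
    _ = (2 ^ σ / (1 - γ) + 2 ^ |γ| / (1 - σ)) * t ^ (-σ + 1 - γ) := by
        rw [show 1 - σ - γ = -σ + 1 - γ by ring, show -σ + 1 - γ = -σ + (1 - γ) by ring,
          rpow_add ht0]
        ring

lemma exists_timeConv_le_of_eq_one (hσ0 : 0 ≤ σ) (hσ1 : σ < 1) :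
    ∃ A > 0, ∀ t, 3 ≤ t → timeConv σ 1 t ≤ A * (t ^ (-σ) * Real.log t) := by
  refine ⟨2 ^ σ + 2 / (1 - σ), by have := sub_pos.2 hσ1; positivity, fun t ht => ?_⟩
  have ht0 : 0 < t := by linarith
  have hlog : 1 ≤ Real.log t := by
    rw [le_log_iff_exp_le ht0]
    linarith [exp_one_lt_d9]
  have hforcing : ∫ u in (1 : ℝ)..1 + t / 2, u ^ (-(1 : ℝ)) ≤ Real.log t := by
    rw [integral_congr (g := fun u : ℝ => u⁻¹) fun u _ => rpow_neg_one u,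
      integral_inv (by rw [uIcc_of_le (by linarith)]; intro h; linarith [h.1]), div_one]
    exact log_le_log (by linarith) (by linarith)
  have hpow : 0 < t ^ (-σ) := rpow_pos_of_pos ht0 _
  calc timeConv σ 1 t
      ≤ 2 ^ σ * t ^ (-σ) * Real.log t + 2 ^ |(1 : ℝ)| / (1 - σ) * t ^ (1 - σ - 1) := by
        grw [timeConv_le hσ0 hσ1 (by linarith), hforcing]
    _ = 2 ^ σ * (t ^ (-σ) * Real.log t) + 2 / (1 - σ) * t ^ (-σ) := by
        rw [abs_one, rpow_one, show 1 - σ - 1 = -σ by ring]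
        ring
    _ ≤ (2 ^ σ + 2 / (1 - σ)) * (t ^ (-σ) * Real.log t) := by
        have hcoef : 0 < 2 / (1 - σ) := div_pos two_pos (sub_pos.2 hσ1)
        have : t ^ (-σ) ≤ t ^ (-σ) * Real.log t := le_mul_of_one_le_right hpow.le hlog
        nlinarith

lemma exists_timeConv_le_of_one_lt (hσ0 : 0 ≤ σ) (hσ1 : σ < 1) (hγ : 1 < γ) :
    ∃ A > 0, ∀ t, 3 ≤ t → timeConv σ γ t ≤ A * t ^ (-σ) := by
  refine ⟨2 ^ σ / (γ - 1) + 2 ^ |γ| / (1 - σ), by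
    have := sub_pos.2 hγ; have := sub_pos.2 hσ1; positivity, fun t ht => ?_⟩
  have ht0 : 0 < t := by linarith
  have hforcing : ∫ u in (1 : ℝ)..1 + t / 2, u ^ (-γ) ≤ 1 / (γ - 1) := by
    rw [integral_rpow (Or.inr ⟨by intro h; linarith [neg_injective h],
      by rw [uIcc_of_le (by linarith)]; intro h; linarith [h.1]⟩), one_rpow,
      show -γ + 1 = -(γ - 1) by ring, div_neg, ← neg_div, neg_sub]
    refine div_le_div_of_nonneg_right ?_ (by linarith)
    linarith [rpow_pos_of_pos (by linarith : (0 : ℝ) < 1 + t / 2) (-(γ - 1))]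
  have hdecay : t ^ (1 - σ - γ) ≤ t ^ (-σ) :=
    rpow_le_rpow_of_exponent_le (by linarith) (by linarith)
  calc timeConv σ γ t
      ≤ 2 ^ σ * t ^ (-σ) * (1 / (γ - 1)) + 2 ^ |γ| / (1 - σ) * t ^ (-σ) := by
        have := sub_pos.2 hσ1
        grw [timeConv_le hσ0 hσ1 (by linarith), hforcing, hdecay]
    _ = (2 ^ σ / (γ - 1) + 2 ^ |γ| / (1 - σ)) * t ^ (-σ) := by ring

end TimeConv

lemma integrable_and_integral_abs_le_of_lintegral_le {X : Type*} [MeasurableSpace X]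
    {μ : Measure X} {g : X → ℝ} {b : ℝ} (hg : AEStronglyMeasurable g μ) (hb : 0 ≤ b)
    (h : ∫⁻ x, ENNReal.ofReal |g x| ∂μ ≤ ENNReal.ofReal b) :
    Integrable g μ ∧ ∫ x, |g x| ∂μ ≤ b := by
  refine ⟨⟨hg, ?_⟩, ?_⟩
  · rw [hasFiniteIntegral_iff_norm]
    exact h.trans_lt ENNReal.ofReal_lt_top
  · rw [integral_eq_lintegral_of_nonneg_ae (ae_of_all _ fun x => abs_nonneg _)
    (by simpa only [Real.norm_eq_abs] using hg.norm)]
    exact ENNReal.toReal_le_of_le_ofReal hb h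

lemma eLpNorm_le_ofReal_of_forall_abs_le {X : Type*} [MeasurableSpace X] {μ : Measure X}
    (hμ : μ univ ≠ ∞) (p : ℝ≥0∞) {g : X → ℝ} {c : ℝ} (h : ∀ x, |g x| ≤ c) :
    eLpNorm g p μ ≤ ENNReal.ofReal ((μ univ ^ p.toReal⁻¹).toReal * c) := by
  rw [ENNReal.ofReal_mul ENNReal.toReal_nonneg,
    ENNReal.ofReal_toReal (ENNReal.rpow_ne_top_of_nonneg (by positivity) hμ)]
  exact eLpNorm_le_of_ae_bound (ae_of_all _ h)

section MildSolution

variable {N : ℕ} {α β C₀ C₁ γ : ℝ} {G : Euc N → ℝ} {f : Euc N → ℝ → ℝ}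

lemma sigmaStar_nonneg (hα0 : 0 < α) (hα1 : α < 1) (hβ : 0 < β) :
    0 ≤ sigmaStar N α β := by
  have : 0 ≤ (N : ℝ) * thetaV α β := by unfold thetaV; positivity
  unfold sigmaStar
  linarith

lemma sigmaStar_lt_one (hα : 0 < α) (hβ : 0 < β) (hN : (N : ℝ) < 2 * β) :
    sigmaStar N α β < 1 := by
  have : (N : ℝ) * thetaV α β < α := by
    unfold thetaV
    rw [mul_div_assoc', div_lt_iff₀ (by positivity)]
    nlinarith
  unfold sigmaStar
  linarith

lemma abs_kernelY_le (hG : ∀ ξ : Euc N, ξ ≠ 0 → |G ξ| ≤ C₁) {x : Euc N} (hx : x ≠ 0)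
    {τ : ℝ} (hτ : 0 < τ) : |kernelY N α β G x τ| ≤ C₁ * τ ^ (-sigmaStar N α β) := by
  have hpow : 0 < τ ^ (-sigmaStar N α β) := rpow_pos_of_pos hτ _
  rw [kernelY, abs_mul, abs_of_pos hpow, mul_comm]
  exact mul_le_mul_of_nonneg_right (hG _ (smul_ne_zero (rpow_pos_of_pos hτ _).ne' hx)) hpow.le

lemma abs_integral_kernelY_mul_le (hN : 1 ≤ N) (hG : ∀ ξ : Euc N, ξ ≠ 0 → |G ξ| ≤ C₁)
    {g : Euc N → ℝ} (hg : Integrable g) {τ : ℝ} (hτ : 0 < τ) (x : Euc N) :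
    |∫ y, kernelY N α β G (x - y) τ * g y| ≤
      C₁ * τ ^ (-sigmaStar N α β) * ∫ y, |g y| := by
  -- `G 0` is unconstrained, so we need the diagonal `y = x` to be null, i.e. `N ≥ 1`.
  have : Nonempty (Fin N) := ⟨⟨0, hN⟩⟩
  have hbound : ∀ᵐ y : Euc N, ‖kernelY N α β G (x - y) τ * g y‖ ≤
      C₁ * τ ^ (-sigmaStar N α β) * |g y| := by
    filter_upwards [compl_mem_ae_iff.2 (measure_singleton x)] with y (hy : y ≠ x)
    rw [norm_mul, Real.norm_eq_abs, Real.norm_eq_abs]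
    exact mul_le_mul_of_nonneg_right (abs_kernelY_le hG (sub_ne_zero.2 hy.symm) hτ) (abs_nonneg _)
  rw [← MeasureTheory.integral_const_mul]
  exact norm_integral_le_of_norm_le (hg.abs.const_mul _) hbound

lemma abs_mildSol_le (hN : 1 ≤ N) (hG : ∀ ξ : Euc N, ξ ≠ 0 → |G ξ| ≤ C₁)
    (hC₁ : 0 ≤ C₁) (hC₀ : 0 ≤ C₀) (hfm : Measurable (Function.uncurry f))
    (hf1 : ∀ t : ℝ, 0 < t →
      (∫⁻ y, ENNReal.ofReal |f y t|) ≤ ENNReal.ofReal (C₀ * (1 + t) ^ (-γ)))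
    (hσ : sigmaStar N α β < 1) {t : ℝ} (ht : 0 ≤ t) (x : Euc N) :
    |mildSol N α β G f x t| ≤ C₁ * C₀ * timeConv (sigmaStar N α β) γ t := by
  have hbound : ∀ s ∈ Ioo 0 t, ‖∫ y, kernelY N α β G (x - y) (t - s) * f y s‖ ≤
      C₁ * C₀ * ((t - s) ^ (-sigmaStar N α β) * (1 + s) ^ (-γ)) := by
    intro s ⟨hs, hst⟩
    have hslice : Measurable (f · s) := hfm.comp (measurable_id.prodMk measurable_const)
    obtain ⟨hint, hL1⟩ := integrable_and_integral_abs_le_of_lintegral_le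
      hslice.aestronglyMeasurable
      (mul_nonneg hC₀ (rpow_nonneg (by linarith) _)) (hf1 s hs)
    calc ‖∫ y, kernelY N α β G (x - y) (t - s) * f y s‖
        ≤ C₁ * (t - s) ^ (-sigmaStar N α β) * ∫ y, |f y s| :=
          abs_integral_kernelY_mul_le hN hG hint (sub_pos.2 hst) x
      _ ≤ C₁ * (t - s) ^ (-sigmaStar N α β) * (C₀ * (1 + s) ^ (-γ)) := by gcongr
      _ = C₁ * C₀ * ((t - s) ^ (-sigmaStar N α β) * (1 + s) ^ (-γ)) := by ring
  have hint : IntegrableOn (fun s => (t - s) ^ (-sigmaStar N α β) * (1 + s) ^ (-γ)) (Ioo 0 t) :=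
    (intervalIntegrable_timeConv_integrand hσ ht subset_rfl).1.mono_set Ioo_subset_Ioc_self
  calc |mildSol N α β G f x t|
      ≤ ∫ s in Ioo 0 t, C₁ * C₀ * ((t - s) ^ (-sigmaStar N α β) * (1 + s) ^ (-γ)) :=
        norm_integral_le_of_norm_le (hint.const_mul _)
          ((ae_restrict_iff' measurableSet_Ioo).2 (ae_of_all _ hbound))
    _ = C₁ * C₀ * timeConv (sigmaStar N α β) γ t := by
        rw [MeasureTheory.integral_const_mul, timeConv, intervalIntegral.integral_of_le ht,
          integral_Ioc_eq_integral_Ioo]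

lemma exists_eLpNorm_mildSol_le (hN : 1 ≤ N) (hG : ∀ ξ : Euc N, ξ ≠ 0 → |G ξ| ≤ C₁)
    (hC₁ : 0 < C₁) (hC₀ : 0 < C₀) (hfm : Measurable (Function.uncurry f))
    (hf1 : ∀ t : ℝ, 0 < t →
      (∫⁻ y, ENNReal.ofReal |f y t|) ≤ ENNReal.ofReal (C₀ * (1 + t) ^ (-γ)))
    (hσ : sigmaStar N α β < 1) (p : ℝ≥0∞) {K : Set (Euc N)} (hK : volume K ≠ ∞)
    {rate : ℝ → ℝ} {A T : ℝ} (hA : 0 < A) (hT : 0 ≤ T)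
    (hJ : ∀ t, T ≤ t → timeConv (sigmaStar N α β) γ t ≤ A * rate t) :
    ∃ C > 0, ∀ t, T ≤ t →
      eLpNorm (fun x => mildSol N α β G f x t) p (volume.restrict K) ≤
        ENNReal.ofReal (C * rate t) := by
  set V := (volume.restrict K univ ^ p.toReal⁻¹).toReal
  refine ⟨(V + 1) * (C₁ * C₀ * A), by positivity, fun t ht => ?_⟩
  have hu : ∀ x, |mildSol N α β G f x t| ≤ C₁ * C₀ * (A * rate t) := fun x =>
    (abs_mildSol_le hN hG hC₁.le hC₀.le hfm hf1 hσ (hT.trans ht) x).trans (by grw [hJ t ht])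
  have hc : 0 ≤ C₁ * C₀ * (A * rate t) := (abs_nonneg _).trans (hu 0)
  grw [eLpNorm_le_ofReal_of_forall_abs_le (by rwa [Measure.restrict_apply_univ]) p hu]
  refine ENNReal.ofReal_le_ofReal ?_
  nlinarith

end MildSolution

theorem compact_upper_N_lt_2beta_general
    (N : ℕ) (hN : 1 ≤ N) (α β : ℝ) (hα0 : 0 < α) (hα1 : α < 1)
    (hβ0 : 0 < β)
    (G : Euc N → ℝ) (C₁ : ℝ) (hC₁ : 0 < C₁)
    (hGpos : ∀ ξ : Euc N, ξ ≠ 0 → 0 < G ξ)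
    (hGin₁ : (N : ℝ) < 4 * β → ∀ ξ : Euc N, ξ ≠ 0 → ‖ξ‖ ≤ 1 → G ξ ≤ C₁)
    (hGout : ∀ ξ : Euc N, 1 ≤ ‖ξ‖ → G ξ ≤ C₁ * ‖ξ‖ ^ (-((N : ℝ) + 2 * β)))
    (γ : ℝ) (f : Euc N → ℝ → ℝ) (hfm : Measurable (Function.uncurry f))
    (C₀ : ℝ) (hC₀ : 0 < C₀)
    (hf1 : ∀ t : ℝ, 0 < t →
      (∫⁻ y, ENNReal.ofReal |f y t|) ≤ ENNReal.ofReal (C₀ * (1 + t) ^ (-γ)))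
    (p : ℝ≥0∞)
    (h2β : (N : ℝ) < 2 * β) :
    ∀ K : Set (Euc N), IsCompact K → ∃ C T : ℝ, 0 < C ∧ 2 ≤ T ∧ ∀ t : ℝ, T ≤ t →
      (γ < 1 → eLpNorm (fun x => mildSol N α β G f x t) p (volume.restrict K) ≤ ENNReal.ofReal (C * t ^ (-sigmaStar N α β + 1 - γ))) ∧
      (γ = 1 → eLpNorm (fun x => mildSol N α β G f x t) p (volume.restrict K) ≤ ENNReal.ofReal (C * t ^ (-sigmaStar N α β) * Real.log t)) ∧
      (1 < γ → eLpNorm (fun x => mildSol N α β G f x t) p (volume.restrict K) ≤ ENNReal.ofReal (C * t ^ (-sigmaStar N α β))) := by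
  intro K hK
  have hG : ∀ ξ : Euc N, ξ ≠ 0 → |G ξ| ≤ C₁ := fun ξ hξ => by
    rw [abs_of_pos (hGpos ξ hξ)]
    rcases le_total ‖ξ‖ 1 with h | h
    · exact hGin₁ (by linarith) ξ hξ h
    · exact (hGout ξ h).trans (mul_le_of_le_one_right hC₁.le
        (rpow_le_one_of_one_le_of_nonpos h (by linarith)))
  have hσ0 := sigmaStar_nonneg (N := N) hα0 hα1 hβ0
  have hσ1 := sigmaStar_lt_one hα0 hβ0 h2β
  have hu := fun {rate : ℝ → ℝ} {A : ℝ} (hA : 0 < A) =>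
    exists_eLpNorm_mildSol_le (rate := rate) hN hG hC₁ hC₀ hfm hf1 hσ1 p
      hK.measure_lt_top.ne hA (by norm_num : (0 : ℝ) ≤ 3)
  rcases lt_trichotomy γ 1 with hγ | rfl | hγ
  · obtain ⟨A, hA, hJ⟩ := exists_timeConv_le_of_lt_one hσ0 hσ1 hγ
    obtain ⟨C, hC, hCu⟩ := hu hA hJ
    exact ⟨C, 3, hC, by norm_num, fun t ht =>
      ⟨fun _ => hCu t ht, fun h => absurd h hγ.ne, fun h => absurd h hγ.not_gt⟩⟩
  · obtain ⟨A, hA, hJ⟩ := exists_timeConv_le_of_eq_one hσ0 hσ1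
    obtain ⟨C, hC, hCu⟩ := hu hA hJ
    exact ⟨C, 3, hC, by norm_num, fun t ht =>
      ⟨fun h => absurd h (lt_irrefl 1), fun _ => mul_assoc C _ _ ▸ hCu t ht,
        fun h => absurd h (lt_irrefl 1)⟩⟩
  · obtain ⟨A, hA, hJ⟩ := exists_timeConv_le_of_one_lt hσ0 hσ1 hγ
    obtain ⟨C, hC, hCu⟩ := hu hA hJ
    exact ⟨C, 3, hC, by norm_num, fun t ht =>
      ⟨fun h => absurd h hγ.not_gt, fun h => absurd h hγ.ne', fun _ => hCu t ht⟩⟩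

theorem compact_upper_N_lt_2beta
    (N : ℕ) (hN : 1 ≤ N) (α β : ℝ) (hα0 : 0 < α) (hα1 : α < 1)
    (hβ0 : 0 < β) (hβ1 : β ≤ 1) (hNβ : (N : ℝ) ≤ 4 * β)
    (G : Euc N → ℝ) (C₁ : ℝ) (hC₁ : 0 < C₁)
    (hGcont : ContinuousOn G {(0 : Euc N)}ᶜ)
    (hGpos : ∀ ξ : Euc N, ξ ≠ 0 → 0 < G ξ)
    (hGin₁ : (N : ℝ) < 4 * β → ∀ ξ : Euc N, ξ ≠ 0 → ‖ξ‖ ≤ 1 → G ξ ≤ C₁)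
    (hGin₂ : (N : ℝ) = 4 * β → ∀ ξ : Euc N, ξ ≠ 0 → ‖ξ‖ ≤ 1 →
      G ξ ≤ C₁ * (1 + |Real.log ‖ξ‖|))
    (hGout : ∀ ξ : Euc N, 1 ≤ ‖ξ‖ → G ξ ≤ C₁ * ‖ξ‖ ^ (-((N : ℝ) + 2 * β)))
    (γ : ℝ) (f : Euc N → ℝ → ℝ) (hfm : Measurable (Function.uncurry f))
    (C₀ : ℝ) (hC₀ : 0 < C₀)
    (hf1 : ∀ t : ℝ, 0 < t →
      (∫⁻ y, ENNReal.ofReal |f y t|) ≤ ENNReal.ofReal (C₀ * (1 + t) ^ (-γ)))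
    (p : ℝ≥0∞) (hp1 : 1 ≤ p)
    (h2β : (N : ℝ) < 2 * β) :
    ∀ K : Set (Euc N), IsCompact K → ∃ C T : ℝ, 0 < C ∧ 2 ≤ T ∧ ∀ t : ℝ, T ≤ t →
      (γ < 1 → eLpNorm (fun x => mildSol N α β G f x t) p (volume.restrict K) ≤ ENNReal.ofReal (C * t ^ (-sigmaStar N α β + 1 - γ))) ∧
      (γ = 1 → eLpNorm (fun x => mildSol N α β G f x t) p (volume.restrict K) ≤ ENNReal.ofReal (C * t ^ (-sigmaStar N α β) * Real.log t)) ∧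
      (1 < γ → eLpNorm (fun x => mildSol N α β G f x t) p (volume.restrict K) ≤ ENNReal.ofReal (C * t ^ (-sigmaStar N α β))) :=
  compact_upper_N_lt_2beta_general N hN α β hα0 hα1 hβ0 G C₁ hC₁ hGpos hGin₁ hGout γ f hfm C₀ hC₀
    hf1 p h2β
end
end
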